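/- arXiv:1705.10492 — 2 statements merged into one kernel-verified Lean document; each statement's English description precedes it below -/
import Mathlib

section
/- There exists a function f : ℝ² → ℂ of class C^∞ with compact support such that for every function λ : ℝ² → ℂ satisfying λ(x)² = f(x) for all x ∈ ℝ², the set S_λ := {x ∈ ℝ² : λ is not continuous at x} has infinite one-dimensional Hausdorff measure, i.e. H¹(S_λ) = ∞. -/
open MeasureTheory Set Filter Topology ENNReal

noncomputable section

abbrev Euc (m : ℕ) : Type := EuclideanSpace ℝ (Fin m)

/-- `f` is of class `C^{k,α}`. -/
def IsCkHolder {m : ℕ} {F : Type*} [NormedAddCommGroup F] [NormedSpace ℝ F]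
    (k : ℕ) (α : ℝ) (f : Euc m → F) : Prop :=
  ContDiff ℝ k f ∧
    ∃ M : ℝ, ∀ x y : Euc m,
      ‖iteratedFDeriv ℝ k f x - iteratedFDeriv ℝ k f y‖ ≤ M * dist x y ^ α

/-- The `C^{k,α}` Hölder norm. -/
noncomputable def holderNorm {m : ℕ} {F : Type*} [NormedAddCommGroup F] [NormedSpace ℝ F]
    (k : ℕ) (α : ℝ) (f : Euc m → F) : ℝ :=
  (⨆ p : Fin (k + 1) × Euc m, ‖iteratedFDeriv ℝ (p.1 : ℕ) f p.2‖) +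
    ⨆ p : Euc m × Euc m,
      ‖iteratedFDeriv ℝ k f p.1 - iteratedFDeriv ℝ k f p.2‖ / dist p.1 p.2 ^ α

/-- Divergence of a vector field. -/
noncomputable def divg {m : ℕ} (ψ : Euc m → Euc m) (x : Euc m) : ℝ :=
  ∑ i : Fin m, (inner ℝ (fderiv ℝ ψ x (EuclideanSpace.single i (1:ℝ)))
      (EuclideanSpace.single i (1:ℝ)) : ℝ)

/-- Admissible test vector fields for the variation. -/
structure TestField {m : ℕ} (U : Set (Euc m)) (ι : Type*) [Fintype ι] : Type _ where
  φ : ι → Euc m → Euc m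
  smooth : ∀ j, ContDiff ℝ (⊤ : ℕ∞) (φ j)
  cpt : ∀ j, HasCompactSupport (φ j)
  suppSub : ∀ j, tsupport (φ j) ⊆ U
  bdd : ∀ x ∈ U, (∑ j : ι, ‖φ j x‖ ^ 2) ≤ 1

/-- The variation of an `ℝ^ι`-valued function on `U`. -/
noncomputable def Var {m : ℕ} {ι : Type*} [Fintype ι]
    (U : Set (Euc m)) (f : Euc m → ι → ℝ) : ℝ≥0∞ :=
  ⨆ T : TestField U ι, ENNReal.ofReal (∑ j : ι, ∫ x in U, f x j * divg (T.φ j) x)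

/-- The variation of a `ℂ`-valued function, identified with an `ℝ²`-valued one. -/
noncomputable def VarC {m : ℕ} (U : Set (Euc m)) (f : Euc m → ℂ) : ℝ≥0∞ :=
  Var U (fun x => ![(f x).re, (f x).im])

/-- A `C^k`-hypersurface. -/
def IsCHypersurface {m : ℕ} (k : ℕ) (S : Set (Euc m)) : Prop :=
  ∀ x ∈ S, ∃ U : Set (Euc m), IsOpen U ∧ x ∈ U ∧
    ∃ g : Euc m → ℝ, ContDiffOn ℝ k g U ∧ (∀ y ∈ U, fderivWithin ℝ g U y ≠ 0) ∧
      S ∩ U = {y ∈ U | g y = 0}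

/-- `lam` is an `r`-th root of `f` on `Ω`. -/
def IsRthRoot {m : ℕ} (r : ℝ) (Ω : Set (Euc m)) (f lam : Euc m → ℂ) : Prop :=
  (∀ x ∈ Ω, f x = 0 → lam x = 0) ∧
  ∃ g : Euc m → ℂ, ∀ x ∈ Ω, f x ≠ 0 →
    Complex.exp (g x) = f x ∧ lam x = Complex.exp (g x / (r : ℂ))

/-- `g` is a weak gradient of `f` on the open set `V`. -/
def IsWeakGradient {m : ℕ} (V : Set (Euc m)) (f : Euc m → ℂ) (g : Euc m → Fin m → ℂ) : Prop :=
  ∀ φ : Euc m → ℝ, ContDiff ℝ (⊤ : ℕ∞) φ → HasCompactSupport φ → tsupport φ ⊆ V →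
    ∀ i : Fin m,
      ∫ x in V, f x * ((fderiv ℝ φ x (EuclideanSpace.single i (1:ℝ)) : ℝ) : ℂ) =
        - ∫ x in V, g x i * ((φ x : ℝ) : ℂ)

/-!
Place countably many copies of the branch point `z ↦ c (z - q)`, each cut off outside a small
disc, so that their discs are disjoint; with coefficients decaying fast enough the sum is smooth
and compactly supported. Near a copy of radius `s`, a square root of the sum is a square root of
`c (z - q)` on every circle of radius `r ≤ s` around `q`, and no such root is continuous along the
whole circle (following it once around changes its sign). So the discontinuity set meets each of
these circles; projecting it by `dist · q`, which is 1-Lipschitz, covers `(0, s]`, so it carries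
`H¹`-mass at least `s` inside the disc. In row `k` there are `2 ^ k` copies of radius `2⁻¹ ^ k / 4`,
so every row contributes `1 / 4` and the total is infinite.
-/

open Metric Complex Real Function
open scoped ContDiff

theorem eq_neg_of_sq_eq_mul_exp_mul_I {h : ℝ → ℂ} (hh : Continuous h) {a : ℂ} (ha : a ≠ 0)
    (hsq : ∀ θ : ℝ, h θ ^ 2 = a * exp (θ * I)) : h (2 * π) = -h 0 := by
  obtain ⟨b, hb⟩ := IsAlgClosed.exists_pow_nat_eq a two_pos
  have hb0 : b ≠ 0 := by rintro rfl; simp [eq_comm, ha] at hb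
  set g : ℝ → ℂ := fun θ => b * exp (θ / 2 * I)
  have hg : Continuous g := by fun_prop
  have hg_sq : ∀ θ : ℝ, g θ ^ 2 = a * exp (θ * I) := fun θ => by
    rw [mul_pow, hb, ← Complex.exp_nat_mul]; push_cast; ring_nf
  have hg_half_turn : g (2 * π) = -g 0 := by
    simp only [g]; push_cast
    rw [show (2 * π : ℂ) / 2 * I = π * I by ring, exp_pi_mul_I]; simp
  rcases isPreconnected_univ.eq_or_eq_neg_of_sq_eq hh.continuousOn hg.continuousOn
    (fun θ _ => by simp only [Pi.pow_apply, hsq, hg_sq]) (fun _ => by simp [g, hb0]) with h | h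
  · rw [h (mem_univ _), h (mem_univ _), hg_half_turn]
  · rw [h (mem_univ _), h (mem_univ _), Pi.neg_apply, Pi.neg_apply, hg_half_turn]

theorem exists_not_continuousAt_of_sq_eq_mul_sub {lam : ℂ → ℂ} {a q : ℂ} (ha : a ≠ 0)
    {r : ℝ} (hr : 0 < r) (hsq : ∀ z ∈ sphere q r, lam z ^ 2 = a * (z - q)) :
    ∃ z ∈ sphere q r, ¬ContinuousAt lam z := by
  by_contra! hcont
  set h : ℝ → ℂ := lam ∘ circleMap q r
  have hh : Continuous h :=
    continuous_iff_continuousAt.2 fun θ =>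
      (hcont _ (circleMap_mem_sphere q hr.le θ)).comp (continuous_circleMap q r).continuousAt
  have hsq' : ∀ θ : ℝ, h θ ^ 2 = (a * r) * exp (θ * I) := fun θ => by
    rw [show h θ = lam (circleMap q r θ) from rfl, hsq _ (circleMap_mem_sphere q hr.le θ),
      circleMap_sub_center, circleMap_zero, mul_assoc]
  have har : a * r ≠ 0 := mul_ne_zero ha (by exact_mod_cast hr.ne')
  have hturn : h 0 = -h 0 := by
    rw [← eq_neg_of_sq_eq_mul_exp_mul_I hh har hsq']
    simp only [h, comp_apply, ← (periodic_circleMap q r).eq]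
  have := hsq' 0
  simp [CharZero.eq_neg_self_iff.1 hturn, ha, hr.ne'] at this

theorem ofReal_le_hausdorffMeasure_one_inter_closedBall {X : Type*} [MetricSpace X]
    [MeasurableSpace X] [BorelSpace X] (D : Set X) (q : X) (b : ℝ)
    (hD : ∀ r ∈ Ioc 0 b, ∃ x ∈ D, dist x q = r) :
    ENNReal.ofReal b ≤ μH[1] (D ∩ closedBall q b) := by
  have hsub : Ioc 0 b ⊆ (dist · q) '' (D ∩ closedBall q b) := fun r hr => by
    obtain ⟨x, hxD, hx⟩ := hD r hr
    exact ⟨x, ⟨hxD, by rw [mem_closedBall, hx]; exact hr.2⟩, hx⟩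
  calc ENNReal.ofReal b = μH[1] (Ioc 0 b) := by rw [hausdorffMeasure_real, volume_Ioc, sub_zero]
    _ ≤ μH[1] ((dist · q) '' (D ∩ closedBall q b)) := measure_mono hsub
    _ ≤ μH[1] (D ∩ closedBall q b) := by
      simpa using (LipschitzWith.dist_left q).hausdorffMeasure_image_le zero_le_one _

theorem tsum_measure_inter_le {X ι : Type*} [MeasurableSpace X] [Countable ι] (μ : Measure X)
    (D : Set X) {A : ι → Set X} (hA : ∀ i, MeasurableSet (A i))
    (hdisj : Pairwise (Disjoint on A)) : ∑' i, μ (D ∩ A i) ≤ μ D := by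
  have := tsum_measure_le_measure_univ (μ := μ.restrict D) (fun i => (hA i).nullMeasurableSet)
    (hdisj.mono fun _ _ h => h.aedisjoint)
  simpa [Measure.restrict_apply (hA _), inter_comm] using this

theorem hausdorffMeasure_setOf_not_continuousAt_comp {X Y Z : Type*} [EMetricSpace X]
    [EMetricSpace Y] [TopologicalSpace Z] [MeasurableSpace X] [BorelSpace X] [MeasurableSpace Y]
    [BorelSpace Y] (e : X ≃ᵢ Y) (lam : Y → Z) (d : ℝ) :
    μH[d] {x | ¬ContinuousAt (lam ∘ e) x} = μH[d] {y | ¬ContinuousAt lam y} := by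
  rw [← e.hausdorffMeasure_preimage]
  congr 1
  ext x
  exact not_congr (e.toHomeomorph.comp_continuousAt_iff' lam x)

theorem norm_iteratedFDeriv_comp_smul_sub_le {E F : Type*} [NormedAddCommGroup E]
    [NormedSpace ℝ E] [NormedAddCommGroup F] [NormedSpace ℝ F] {f : E → F} {i : ℕ}
    (hf : ContDiff ℝ i f) {s : ℝ} (hs : 0 ≤ s) (q x : E) :
    ‖iteratedFDeriv ℝ i (fun z => f (s • (z - q))) x‖ ≤
      s ^ i * ‖iteratedFDeriv ℝ i f (s • (x - q))‖ := by
  set L : E →L[ℝ] E := s • ContinuousLinearMap.id ℝ E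
  have hL : ‖L‖ ≤ s := by
    simpa [L, abs_of_nonneg hs] using (norm_smul_le s (ContinuousLinearMap.id ℝ E)).trans
      (mul_le_of_le_one_right (abs_nonneg s) ContinuousLinearMap.norm_id_le)
  rw [iteratedFDeriv_comp_sub (f := fun z => f (s • z)),
    show (fun z => f (s • z)) = f ∘ L from rfl, L.iteratedFDeriv_comp_right hf _ le_rfl]
  refine (ContinuousMultilinearMap.norm_compContinuousLinearMap_le _ _).trans ?_
  rw [mul_comm]
  simp only [Finset.prod_const, Finset.card_univ, Fintype.card_fin]
  gcongr
  rfl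

def unitBump : ContDiffBump (0 : ℂ) := ⟨1, 2, one_pos, one_lt_two⟩

def bumpId (z : ℂ) : ℂ := unitBump z • z

theorem contDiff_bumpId : ContDiff ℝ ∞ bumpId := unitBump.contDiff.smul contDiff_id

theorem bumpId_of_norm_le_one {z : ℂ} (hz : ‖z‖ ≤ 1) : bumpId z = z := by
  rw [bumpId, unitBump.one_of_mem_closedBall (by simpa [unitBump] using hz), one_smul]

theorem bumpId_of_two_le_norm {z : ℂ} (hz : 2 ≤ ‖z‖) : bumpId z = 0 := by
  have : unitBump z = 0 := Function.notMem_support.1 fun h => by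
    rw [unitBump.support_eq, mem_ball_zero_iff] at h
    exact (h.trans_le hz).false
  rw [bumpId, this, zero_smul]

theorem hasCompactSupport_bumpId : HasCompactSupport bumpId :=
  HasCompactSupport.intro (isCompact_closedBall 0 2) fun _ hz =>
    bumpId_of_two_le_norm (not_le.1 (mt mem_closedBall_zero_iff.2 hz)).le

theorem exists_bound_norm_iteratedFDeriv_bumpId (i : ℕ) :
    ∃ C, ∀ z, ‖iteratedFDeriv ℝ i bumpId z‖ ≤ C :=
  (contDiff_bumpId.continuous_iteratedFDeriv (mod_cast le_top)).bounded_above_of_compact_support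
    (hasCompactSupport_bumpId.iteratedFDeriv i)

/-- `⟨k, j⟩` is the `j`-th of the `2 ^ k` branch points in row `k`. -/
abbrev Site : Type := Σ k : ℕ, Fin (2 ^ k)

namespace Site

def center (p : Site) : ℂ := ⟨2⁻¹ ^ p.1 * p.2, 3 * 2⁻¹ ^ p.1⟩

def radius (p : Site) : ℝ := 2⁻¹ ^ p.1 / 4

/-- Chosen so that `coeff * radius⁻¹ ^ i ≤ 4⁻¹ ^ k` in every row `k ≥ i`, which makes the sum
smooth. -/
def coeff (p : Site) : ℝ := p.radius ^ p.1 / 4 ^ p.1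

theorem radius_pos (p : Site) : 0 < p.radius := by unfold radius; positivity

theorem radius_le_one (p : Site) : p.radius ≤ 1 := by
  have : (2⁻¹ : ℝ) ^ p.1 ≤ 1 := pow_le_one₀ (by norm_num) (by norm_num)
  unfold radius; linarith

theorem coeff_pos (p : Site) : 0 < p.coeff := by have := p.radius_pos; unfold coeff; positivity

theorem norm_center_le (p : Site) : ‖p.center‖ ≤ 4 := by
  obtain ⟨k, j⟩ := p
  have hk : (0 : ℝ) < 2⁻¹ ^ k := by positivity
  have hk1 : (2⁻¹ : ℝ) ^ k ≤ 1 := pow_le_one₀ (by norm_num) (by norm_num)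
  have hj : (2⁻¹ : ℝ) ^ k * j ≤ 1 := by
    rw [inv_pow, inv_mul_le_one₀ (by positivity)]
    exact_mod_cast j.2.le
  refine (norm_le_abs_re_add_abs_im _).trans ?_
  simp only [center, abs_of_nonneg (by positivity : (0 : ℝ) ≤ 2⁻¹ ^ k * j),
    abs_of_nonneg (by positivity : (0 : ℝ) ≤ 3 * 2⁻¹ ^ k)]
  linarith

theorem two_mul_radius_add_le_dist {p p' : Site} (h : p ≠ p') :
    2 * p.radius + 2 * p'.radius ≤ dist p.center p'.center := by
  obtain ⟨k, j⟩ := p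
  obtain ⟨k', j'⟩ := p'
  have hk : (0 : ℝ) < 2⁻¹ ^ k := by positivity
  have hk' : (0 : ℝ) < 2⁻¹ ^ k' := by positivity
  have hre := abs_re_le_norm (center ⟨k, j⟩ - center ⟨k', j'⟩)
  have him := abs_im_le_norm (center ⟨k, j⟩ - center ⟨k', j'⟩)
  rw [dist_eq_norm]
  simp only [radius, center, sub_re, sub_im] at hre him ⊢
  rcases lt_trichotomy k k' with hkk' | rfl | hkk'
  · have : (2⁻¹ : ℝ) ^ k' ≤ 2⁻¹ ^ k * 2⁻¹ :=
      (pow_le_pow_of_le_one (by norm_num) (by norm_num) hkk').trans_eq (pow_succ _ _)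
    linarith [le_abs_self (3 * (2⁻¹ : ℝ) ^ k - 3 * 2⁻¹ ^ k')]
  · have hj : (j : ℤ) ≠ j' := by
      have : j ≠ j' := fun hjj => h (by rw [hjj])
      exact_mod_cast Fin.val_injective.ne this
    have hjj : (1 : ℝ) ≤ |(j : ℝ) - j'| := by exact_mod_cast Int.one_le_abs (sub_ne_zero.2 hj)
    rw [← mul_sub, abs_mul, abs_of_pos hk] at hre
    nlinarith
  · have : (2⁻¹ : ℝ) ^ k ≤ 2⁻¹ ^ k' * 2⁻¹ :=
      (pow_le_pow_of_le_one (by norm_num) (by norm_num) hkk').trans_eq (pow_succ _ _)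
    linarith [neg_abs_le (3 * (2⁻¹ : ℝ) ^ k - 3 * 2⁻¹ ^ k')]

theorem pairwise_disjoint_closedBall :
    Pairwise (Disjoint on fun p : Site => closedBall p.center p.radius) := fun p p' h =>
  closedBall_disjoint_closedBall <| by
    linarith [two_mul_radius_add_le_dist h, p.radius_pos, p'.radius_pos]

theorem tsum_ofReal_radius : ∑' p : Site, ENNReal.ofReal p.radius = ⊤ := by
  have hrow (k : ℕ) :
      ∑' j : Fin (2 ^ k), ENNReal.ofReal (radius ⟨k, j⟩) = ENNReal.ofReal 4⁻¹ := by
    simp only [radius, tsum_fintype, Finset.sum_const, Finset.card_univ, Fintype.card_fin,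
      nsmul_eq_mul]
    rw [← ENNReal.ofReal_natCast, ← ENNReal.ofReal_mul (by positivity)]
    congr 1
    push_cast
    rw [inv_pow, mul_div_assoc', mul_inv_cancel₀ (by positivity)]
    norm_num
  rw [ENNReal.tsum_sigma', tsum_congr hrow, ENNReal.tsum_const_eq_top_of_ne_zero (by norm_num)]

def bump (p : Site) (z : ℂ) : ℂ := p.coeff • bumpId (p.radius⁻¹ • (z - p.center))

theorem contDiff_bump (p : Site) : ContDiff ℝ ∞ p.bump :=
  (contDiff_bumpId.comp ((contDiff_id.sub contDiff_const).const_smul _)).const_smul _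

theorem bump_of_dist_le {p : Site} {z : ℂ} (hz : dist z p.center ≤ p.radius) :
    p.bump z = (p.coeff / p.radius : ℝ) * (z - p.center) := by
  have hr := p.radius_pos
  rw [bump, bumpId_of_norm_le_one, smul_smul, Complex.real_smul, div_eq_mul_inv]
  rw [norm_smul, Real.norm_eq_abs, abs_inv, abs_of_pos hr, ← dist_eq_norm]
  exact inv_mul_le_one_of_le₀ hz hr.le

theorem bump_of_le_dist {p : Site} {z : ℂ} (hz : 2 * p.radius ≤ dist z p.center) :
    p.bump z = 0 := by
  have hr := p.radius_pos
  rw [bump, bumpId_of_two_le_norm, smul_zero]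
  rw [norm_smul, Real.norm_eq_abs, abs_inv, abs_of_pos hr, ← dist_eq_norm]
  rw [le_inv_mul_iff₀ hr]
  linarith

theorem norm_iteratedFDeriv_bump_le (p : Site) {i : ℕ} {C : ℝ}
    (hC : ∀ z, ‖iteratedFDeriv ℝ i bumpId z‖ ≤ C) (z : ℂ) :
    ‖iteratedFDeriv ℝ i p.bump z‖ ≤ p.coeff * p.radius⁻¹ ^ i * C := by
  have hr := p.radius_pos
  have hcomp : ContDiff ℝ i fun z => bumpId (p.radius⁻¹ • (z - p.center)) :=
    (contDiff_bumpId.comp ((contDiff_id.sub contDiff_const).const_smul _)).of_le (mod_cast le_top)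
  unfold bump
  rw [iteratedFDeriv_const_smul_apply' hcomp.contDiffAt, norm_smul, Real.norm_eq_abs,
    abs_of_pos p.coeff_pos, mul_assoc]
  refine mul_le_mul_of_nonneg_left ?_ p.coeff_pos.le
  exact (norm_iteratedFDeriv_comp_smul_sub_le (contDiff_bumpId.of_le (mod_cast le_top))
    (inv_pos.2 hr).le _ _).trans (by gcongr; exact hC _)

theorem summable_coeff_mul_inv_radius_pow (i : ℕ) :
    Summable fun p : Site => p.coeff * p.radius⁻¹ ^ i := by
  have hnonneg : ∀ p : Site, 0 ≤ p.coeff * p.radius⁻¹ ^ i := fun p => by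
    have := p.coeff_pos; have := p.radius_pos; positivity
  refine (summable_sigma_of_nonneg hnonneg).2 ⟨fun _ => .of_finite, ?_⟩
  refine Summable.of_norm_bounded_eventually_nat summable_geometric_two ?_
  filter_upwards [eventually_ge_atTop i] with k hk
  set r := radius ⟨k, 0⟩
  have hr : ∀ j, radius ⟨k, j⟩ = r := fun _ => rfl
  have hr0 : 0 < r := radius_pos _
  have hpow : r ^ k * r⁻¹ ^ i ≤ 1 := by
    rw [inv_pow, ← div_eq_mul_inv, div_le_one (by positivity)]
    exact pow_le_pow_of_le_one hr0.le (radius_le_one _) hk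
  simp only [coeff, hr, tsum_fintype, Finset.sum_const, Finset.card_univ, Fintype.card_fin,
    nsmul_eq_mul]
  rw [Real.norm_of_nonneg (by positivity), div_mul_eq_mul_div, ← mul_div_assoc,
    div_le_iff₀ (by positivity)]
  calc (2 ^ k : ℕ) * (r ^ k * r⁻¹ ^ i) ≤ (2 : ℝ) ^ k * 1 := by push_cast; gcongr
    _ = (1 / 2) ^ k * 4 ^ k := by
      rw [div_pow, one_pow, show (4 : ℝ) ^ k = 2 ^ k * 2 ^ k by rw [← mul_pow]; norm_num]
      field_simp

end Site

def branchPointSum (z : ℂ) : ℂ := ∑' p : Site, p.bump z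

theorem contDiff_branchPointSum : ContDiff ℝ ∞ branchPointSum := by
  choose C hC using exists_bound_norm_iteratedFDeriv_bumpId
  exact contDiff_tsum Site.contDiff_bump
    (fun i _ => (Site.summable_coeff_mul_inv_radius_pow i).mul_right (C i))
    (fun i p z _ => p.norm_iteratedFDeriv_bump_le (hC i) z)

theorem hasCompactSupport_branchPointSum : HasCompactSupport branchPointSum := by
  refine HasCompactSupport.intro (isCompact_closedBall 0 6) fun z hz => ?_
  have hz : 6 < ‖z‖ := not_le.1 (mt mem_closedBall_zero_iff.2 hz)
  refine (tsum_congr fun p => Site.bump_of_le_dist ?_).trans tsum_zero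
  have := norm_sub_norm_le z p.center
  linarith [p.norm_center_le, p.radius_le_one, dist_eq_norm z p.center]

theorem branchPointSum_of_dist_le {p : Site} {z : ℂ} (hz : dist z p.center ≤ p.radius) :
    branchPointSum z = (p.coeff / p.radius : ℝ) * (z - p.center) := by
  rw [branchPointSum, tsum_eq_single p fun p' hp' => Site.bump_of_le_dist ?_,
    Site.bump_of_dist_le hz]
  linarith [Site.two_mul_radius_add_le_dist hp', dist_triangle_left p'.center p.center z,
    dist_comm z p'.center, p.radius_pos]

theorem hausdorffMeasure_setOf_not_continuousAt_eq_top {lam : ℂ → ℂ}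
    (hlam : ∀ z, lam z ^ 2 = branchPointSum z) :
    μH[1] {z | ¬ContinuousAt lam z} = ⊤ := by
  set D := {z | ¬ContinuousAt lam z}
  have hball (p : Site) :
      ENNReal.ofReal p.radius ≤ μH[1] (D ∩ closedBall p.center p.radius) := by
    refine ofReal_le_hausdorffMeasure_one_inter_closedBall D _ _ fun r hr => ?_
    have ha : ((p.coeff / p.radius : ℝ) : ℂ) ≠ 0 := by
      exact_mod_cast (div_pos p.coeff_pos p.radius_pos).ne'
    obtain ⟨z, hz, hzD⟩ := exists_not_continuousAt_of_sq_eq_mul_sub (q := p.center) ha hr.1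
      fun z hz => by rw [hlam, branchPointSum_of_dist_le ((mem_sphere.1 hz).trans_le hr.2)]
    exact ⟨z, hzD, mem_sphere.1 hz⟩
  refine top_le_iff.1 ?_
  calc ⊤ = ∑' p : Site, ENNReal.ofReal p.radius := Site.tsum_ofReal_radius.symm
    _ ≤ ∑' p : Site, μH[1] (D ∩ closedBall p.center p.radius) := ENNReal.tsum_le_tsum hball
    _ ≤ μH[1] D := tsum_measure_inter_le _ D (fun _ => measurableSet_closedBall)
        Site.pairwise_disjoint_closedBall

/-- A smooth compactly supported `f : ℝ² → ℂ` all of whose square roots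
have a discontinuity set of infinite `H¹`-measure. -/
theorem exists_smooth_with_bad_sqrt :
    ∃ f : Euc 2 → ℂ, ContDiff ℝ (⊤ : ℕ∞) f ∧ HasCompactSupport f ∧
      ∀ lam : Euc 2 → ℂ, (∀ x, lam x ^ 2 = f x) →
        (μH[(1 : ℝ)] : Measure (Euc 2)) {x : Euc 2 | ¬ ContinuousAt lam x} = ⊤ := by
  let e : ℂ ≃ₗᵢ[ℝ] Euc 2 := Complex.orthonormalBasisOneI.repr
  refine ⟨branchPointSum ∘ e.symm, contDiff_branchPointSum.comp e.symm.contDiff,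
    hasCompactSupport_branchPointSum.comp_homeomorph e.symm.toHomeomorph, fun lam hlam => ?_⟩
  rw [← hausdorffMeasure_setOf_not_continuousAt_comp e.toIsometryEquiv]
  exact hausdorffMeasure_setOf_not_continuousAt_eq_top fun z => by simpa using hlam (e z)
end
end

section
/- Let a < b be real numbers, set Ω := (a, b), and let Ω₀ ⊆ Ω be an open subset. Let f : ℝ → ℂ be a function such that for every x ∈ Ω \ Ω₀ one has f(x) = 0 and f is continuous at x. Then the pointwise variations of f over Ω and over Ω₀ coincide: eVar(f, Ω) = eVar(f, Ω₀). In particular, f has bounded pointwise variation on Ω if and only if it has bounded pointwise variation on Ω₀. -/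
/-!
Split a partition of `(a, b)` into its consecutive steps `[t, t']`. If both endpoints lie in the
open set `Ω₀` the step is already counted by the variation on `Ω₀`, and if neither does it
contributes `0`. Otherwise connectedness of `[t, t']` yields a point `c ∉ Ω₀` adherent to
`Ω₀ ∩ [t, t']`; there `f c = 0`, and continuity at `c` bounds `|f t - f t'|` by the variation of
`f` on `Ω₀ ∩ [t, t']`. These pieces of `Ω₀` are ordered, so their variations add up to at most
the variation on `Ω₀`.
-/

open MeasureTheory Set Filter Topology ENNReal

noncomputable section

theorem IsPreconnected.exists_mem_closure_inter_of_mem_diff {X : Type*} [TopologicalSpace X]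
    {S U : Set X} (hS : IsPreconnected S) (hU : IsOpen U) {x y : X} (hx : x ∈ S ∩ U)
    (hy : y ∈ S \ U) : ∃ c ∈ S \ U, c ∈ closure (U ∩ S) := by
  by_contra! h
  have hcover : S ⊆ U ∪ (closure (U ∩ S))ᶜ := fun z hz => by
    by_cases hzU : z ∈ U
    · exact Or.inl hzU
    · exact Or.inr (h z ⟨hz, hzU⟩)
  obtain ⟨z, hzS, hzU, hz⟩ := hS U _ hU isClosed_closure.isOpen_compl hcover ⟨x, hx⟩
    ⟨y, hy.1, h y hy⟩
  exact hz (subset_closure ⟨hzU, hzS⟩)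

namespace eVariationOn

variable {E : Type*} [PseudoEMetricSpace E]

section LinearOrder

variable {α : Type*} [LinearOrder α] {f : α → E}

theorem sum_inter_Icc_le (s : Set α) {u : ℕ → α} (hu : Monotone u) (n : ℕ) :
    ∑ i ∈ Finset.range n, eVariationOn f (s ∩ Icc (u i) (u (i + 1))) ≤
      eVariationOn f (s ∩ Icc (u 0) (u n)) := by
  induction n with
  | zero => simp
  | succ n ih =>
    rw [Finset.sum_range_succ]
    calc _ ≤ eVariationOn f (s ∩ Icc (u 0) (u n)) +
          eVariationOn f (s ∩ Icc (u n) (u (n + 1))) := add_le_add_left ih _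
      _ ≤ eVariationOn f (s ∩ Icc (u 0) (u n) ∪ s ∩ Icc (u n) (u (n + 1))) :=
          add_le_union f fun _ hp _ hq => hp.2.2.trans hq.2.1
      _ ≤ eVariationOn f (s ∩ Icc (u 0) (u (n + 1))) := by
          rw [← inter_union_distrib_left,
            Icc_union_Icc_eq_Icc (hu (Nat.zero_le n)) (hu n.le_succ)]

variable [TopologicalSpace α]

theorem edist_le_of_mem_closure {s : Set α} {x c : α} (hx : x ∈ s)
    (hc : c ∈ closure s) (hfc : ContinuousWithinAt f s c) :
    edist (f x) (f c) ≤ eVariationOn f s := by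
  have hball : f '' s ⊆ {p : E | edist (f x) p ≤ eVariationOn f s} :=
    image_subset_iff.2 fun y hy => edist_le f hx hy
  have hclosed : IsClosed {p : E | edist (f x) p ≤ eVariationOn f s} :=
    isClosed_le (continuous_const.edist continuous_id) continuous_const
  exact closure_minimal hball hclosed (hfc.mem_closure_image hc)

variable {S U : Set α} {e : E}

theorem edist_le_inter_of_isPreconnected_of_mem_diff (hS : IsPreconnected S) (hU : IsOpen U)
    (hf : ∀ z ∈ S \ U, f z = e ∧ ContinuousAt f z) {x y : α} (hx : x ∈ S ∩ U)
    (hy : y ∈ S \ U) : edist (f x) (f y) ≤ eVariationOn f (U ∩ S) := by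
  obtain ⟨c, hc, hc_cl⟩ := hS.exists_mem_closure_inter_of_mem_diff hU hx hy
  rw [(hf y hy).1, ← (hf c hc).1]
  exact edist_le_of_mem_closure ⟨hx.2, hx.1⟩ hc_cl (hf c hc).2.continuousWithinAt

theorem edist_le_inter_of_isPreconnected (hS : IsPreconnected S) (hU : IsOpen U)
    (hf : ∀ z ∈ S \ U, f z = e ∧ ContinuousAt f z) {x y : α} (hx : x ∈ S) (hy : y ∈ S) :
    edist (f x) (f y) ≤ eVariationOn f (U ∩ S) := by
  by_cases hxU : x ∈ U <;> by_cases hyU : y ∈ U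
  · exact edist_le f ⟨hxU, hx⟩ ⟨hyU, hy⟩
  · exact edist_le_inter_of_isPreconnected_of_mem_diff hS hU hf ⟨hx, hxU⟩ ⟨hy, hyU⟩
  · rw [edist_comm]
    exact edist_le_inter_of_isPreconnected_of_mem_diff hS hU hf ⟨hy, hyU⟩ ⟨hx, hxU⟩
  · simp [(hf x ⟨hx, hxU⟩).1, (hf y ⟨hy, hyU⟩).1]

end LinearOrder

theorem eq_of_isOpen_of_const_on_diff {α : Type*} [ConditionallyCompleteLinearOrder α]
    [TopologicalSpace α] [OrderTopology α] [DenselyOrdered α] {f : α → E} {s U : Set α} {e : E}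
    (hs : s.OrdConnected) (hU : IsOpen U) (hUs : U ⊆ s)
    (hf : ∀ z ∈ s \ U, f z = e ∧ ContinuousAt f z) :
    eVariationOn f s = eVariationOn f U := by
  refine le_antisymm (iSup_le ?_) (mono f hUs)
  rintro ⟨n, u, hu, us⟩
  have hstep : ∀ i, Icc (u i) (u (i + 1)) ⊆ s := fun i => hs.out (us i) (us (i + 1))
  calc ∑ i ∈ Finset.range n, edist (f (u (i + 1))) (f (u i))
      ≤ ∑ i ∈ Finset.range n, eVariationOn f (U ∩ Icc (u i) (u (i + 1))) :=
        Finset.sum_le_sum fun i _ =>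
          edist_le_inter_of_isPreconnected isPreconnected_Icc hU
            (fun z hz => hf z ⟨hstep i hz.1, hz.2⟩)
            (right_mem_Icc.2 (hu i.le_succ)) (left_mem_Icc.2 (hu i.le_succ))
    _ ≤ eVariationOn f (U ∩ Icc (u 0) (u n)) := sum_inter_Icc_le U hu n
    _ ≤ eVariationOn f U := mono f inter_subset_left

end eVariationOn

theorem eVariationOn_extension_by_zero_general (a b : ℝ) (Ω₀ : Set ℝ)
    (hΩ₀o : IsOpen Ω₀) (hΩ₀ : Ω₀ ⊆ Set.Ioo a b) (f : ℝ → ℂ)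
    (hf : ∀ x ∈ Set.Ioo a b \ Ω₀, f x = 0 ∧ ContinuousAt f x) :
    eVariationOn f (Set.Ioo a b) = eVariationOn f Ω₀ ∧
      (BoundedVariationOn f (Set.Ioo a b) ↔ BoundedVariationOn f Ω₀) := by
  have h := eVariationOn.eq_of_isOpen_of_const_on_diff ordConnected_Ioo hΩ₀o hΩ₀ hf
  exact ⟨h, by rw [BoundedVariationOn, BoundedVariationOn, h]⟩

/-- Extension by zero does not change the pointwise variation (1-d case). -/
theorem eVariationOn_extension_by_zero (a b : ℝ) (hab : a < b) (Ω₀ : Set ℝ)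
    (hΩ₀o : IsOpen Ω₀) (hΩ₀ : Ω₀ ⊆ Set.Ioo a b) (f : ℝ → ℂ)
    (hf : ∀ x ∈ Set.Ioo a b \ Ω₀, f x = 0 ∧ ContinuousAt f x) :
    eVariationOn f (Set.Ioo a b) = eVariationOn f Ω₀ ∧
      (BoundedVariationOn f (Set.Ioo a b) ↔ BoundedVariationOn f Ω₀) :=
  eVariationOn_extension_by_zero_general a b Ω₀ hΩ₀o hΩ₀ f hf

end
end
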